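/- arXiv:1912.11165 — 3 statements merged into one kernel-verified Lean document; each statement's English description precedes it below -/
import Mathlib

section
/- Theorem 1 (L-sequence-weighted downward closure property, LDCP): Let δ be a finite database of C-sequences, let k ∈ ℕ, and let L and L' be L-sequences such that L is a sub-L-sequence of L' and |L'| ≤ k. Then LWU_k(L') ≤ LWU_k(L). -/
open scoped Classical

variable {α : Type*}

/-- C-eventset containment: `(c, λ) ⊑ (c', λ')` iff `c ⊆ c'` and `λ = λ'`. -/
def EsetSub (σ τ : Finset α × ℕ) : Prop := σ.1 ⊆ τ.1 ∧ σ.2 = τ.2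

/-- C-sequence containment: `C ⊑ C'` iff there are strictly increasing indices
`j_1 < … < j_n` into `C'` with `σ_k ⊑ σ'_{j_k}` for all `k`. -/
def CSub (C C' : List (Finset α × ℕ)) : Prop :=
  ∃ D : List (Finset α × ℕ), D.Sublist C' ∧ List.Forall₂ EsetSub C D

/-- `C ∼ L` : the C-sequence `C` matches the L-sequence `L`. -/
def Matches (C : List (Finset α × ℕ)) (L : List (Finset α)) : Prop :=
  C.map Prod.fst = L

/-- `L` is a sub-L-sequence of `L'`. -/
def LSub (L L' : List (Finset α)) : Prop :=
  ∃ M : List (Finset α), M.Sublist L' ∧ List.Forall₂ (fun a b => a ⊆ b) L M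

/-- Utility of a C-eventset: `u_e (c, λ) = λ · Σ_{l ∈ c} p l`. -/
noncomputable def ue (p : α → ℝ) (σ : Finset α × ℕ) : ℝ := (σ.2 : ℝ) * ∑ l ∈ σ.1, p l

/-- Utility of a C-sequence: sum of the utilities of its C-eventsets. -/
noncomputable def us (p : α → ℝ) (C : List (Finset α × ℕ)) : ℝ := (C.map (ue p)).sum

/-- `u_maxk (C, k)`: the maximum utility of at most `k` C-eventsets in `C`. -/
noncomputable def umaxk (p : α → ℝ) (C : List (Finset α × ℕ)) (k : ℕ) : ℝ :=
  sSup { x : ℝ | ∃ C'', CSub C'' C ∧ C''.length ≤ k ∧ x = us p C'' }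

/-- `LWU_k(L)`: the L-sequence-weighted utilization of `L` w.r.t. maximum length `k`. -/
noncomputable def LWU (p : α → ℝ) (δ : Finset (List (Finset α × ℕ))) (k : ℕ)
    (L : List (Finset α)) : ℝ :=
  ∑ C ∈ δ, if ∃ C', CSub C' C ∧ Matches C' L then umaxk p C k else 0

/-- `u_max(L)`: the maximum utility of the L-sequence `L` in the database `δ`. -/
noncomputable def umax (p : α → ℝ) (δ : Finset (List (Finset α × ℕ)))
    (L : List (Finset α)) : ℝ :=
  ∑ C ∈ δ, sSup ({ x : ℝ | ∃ C', CSub C' C ∧ Matches C' L ∧ x = us p C' } ∪ {0})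

/-!
Whenever a C-sequence of the database contains a C-sequence matching `L'`, it also contains one
matching `L`: compose the embedding of `L` into `L'` with that of `L'` into the C-sequence. Since
`u_maxk` is nonnegative (the empty C-sequence is admissible), `LWU_k(L')` is then dominated
termwise by `LWU_k(L)`.
-/

lemma csub_iff_sublistForall₂ {C C' : List (Finset α × ℕ)} :
    CSub C C' ↔ List.SublistForall₂ EsetSub C C' := by
  rw [List.sublistForall₂_iff]
  exact ⟨fun ⟨D, hD, h⟩ => ⟨D, h, hD⟩, fun ⟨D, h, hD⟩ => ⟨D, hD, h⟩⟩

instance : IsTrans (Finset α × ℕ) EsetSub :=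
  ⟨fun _ _ _ hab hbc => ⟨hab.1.trans hbc.1, hab.2.trans hbc.2⟩⟩

lemma CSub.trans {C₁ C₂ C₃ : List (Finset α × ℕ)} (h₁₂ : CSub C₁ C₂) (h₂₃ : CSub C₂ C₃) :
    CSub C₁ C₃ :=
  csub_iff_sublistForall₂.2 <|
    trans_of _ (csub_iff_sublistForall₂.1 h₁₂) (csub_iff_sublistForall₂.1 h₂₃)

/-- Each coincidence of `L` borrows the duration of the C-eventset it is embedded in. -/
lemma exists_csub_matches_of_sublistForall₂ {L : List (Finset α)} {C : List (Finset α × ℕ)}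
    (h : List.SublistForall₂ (fun a σ => a ⊆ σ.1) L C) :
    ∃ C', CSub C' C ∧ Matches C' L := by
  simp only [csub_iff_sublistForall₂, Matches]
  induction h with
  | nil => exact ⟨[], .nil, rfl⟩
  | @cons a σ _ _ haσ _ ih =>
    obtain ⟨C', hC', rfl⟩ := ih
    exact ⟨(a, σ.2) :: C', .cons ⟨haσ, rfl⟩ hC', rfl⟩
  | cons_right _ ih =>
    obtain ⟨C', hC', hM⟩ := ih
    exact ⟨C', .cons_right hC', hM⟩

lemma LSub.exists_csub_matches {L L' : List (Finset α)} {C : List (Finset α × ℕ)}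
    (hL : LSub L L') (hC : Matches C L') :
    ∃ C', CSub C' C ∧ Matches C' L := by
  obtain ⟨M, hM, hLM⟩ := hL
  have hLL' : List.SublistForall₂ (· ⊆ ·) L L' := List.sublistForall₂_iff.2 ⟨M, hLM, hM⟩
  rw [← hC, List.sublistForall₂_map_right_iff] at hLL'
  exact exists_csub_matches_of_sublistForall₂ hLL'

lemma umaxk_nonneg (p : α → ℝ) (C : List (Finset α × ℕ)) (k : ℕ) : 0 ≤ umaxk p C k := by
  set S := { x : ℝ | ∃ C'', CSub C'' C ∧ C''.length ≤ k ∧ x = us p C'' }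
  have h0 : (0 : ℝ) ∈ S := ⟨[], ⟨[], List.nil_sublist _, .nil⟩, Nat.zero_le k, by simp [us]⟩
  by_cases hS : BddAbove S
  · exact le_csSup hS h0
  · rw [umaxk, Real.sSup_of_not_bddAbove hS]

theorem ldcp_general (p : α → ℝ)
    (δ : Finset (List (Finset α × ℕ))) (k : ℕ)
    (L L' : List (Finset α)) (hL : LSub L L') :
    LWU p δ k L' ≤ LWU p δ k L := by
  refine Finset.sum_le_sum fun C _ => ?_
  split_ifs with hL' hLC
  · exact le_rfl
  · obtain ⟨C', hC', hM'⟩ := hL'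
    obtain ⟨C'', hC'', hM''⟩ := hL.exists_csub_matches hM'
    exact absurd ⟨C'', hC''.trans hC', hM''⟩ hLC
  · exact umaxk_nonneg p C k
  · exact le_rfl

/-- Theorem 1, LDCP: if `L ⊑ L'` and `|L'| ≤ k`, then
`LWU_k(L') ≤ LWU_k(L)`. -/
theorem ldcp (p : α → ℝ) (hp : ∀ l, 0 ≤ p l)
    (δ : Finset (List (Finset α × ℕ))) (k : ℕ)
    (L L' : List (Finset α)) (hL : LSub L L') (hlen : L'.length ≤ k) :
    LWU p δ k L' ≤ LWU p δ k L :=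
  ldcp_general p δ k L L' hL
end

section
/- Let δ be a finite database of C-sequences, k ∈ ℕ, and L an L-sequence with |L| ≤ k. Then u_max(L) ≤ LWU_k(L); that is, the L-sequence-weighted utilization is an upper bound on the maximum utility of L in δ. -/
open scoped Classical

variable {α : Type*}

/-!
Since `p ≥ 0`, utility is monotone under C-sequence containment, so the candidate sets are
bounded by `u_s(C)`. A match `C'` of `L` in `C` has length `|L| ≤ k`, hence `u_s(C')` is also a
candidate for `u_maxk(C, k)`, as is `0` via the empty C-sequence; comparing suprema termwise
gives the bound. Sequences containing no match contribute `0` to both sides.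
-/

section Utility

variable {p : α → ℝ}

lemma ue_nonneg (hp : ∀ l, 0 ≤ p l) (σ : Finset α × ℕ) : 0 ≤ ue p σ :=
  mul_nonneg σ.2.cast_nonneg (Finset.sum_nonneg fun l _ => hp l)

lemma ue_le_ue_of_esetSub (hp : ∀ l, 0 ≤ p l) {σ τ : Finset α × ℕ} (h : EsetSub σ τ) :
    ue p σ ≤ ue p τ := by
  rw [ue, ue, h.2]
  gcongr
  exacts [fun l _ _ => hp l, h.1]

lemma us_le_us_of_csub (hp : ∀ l, 0 ≤ p l) {C' C : List (Finset α × ℕ)} (h : CSub C' C) :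
    us p C' ≤ us p C := by
  obtain ⟨D, hDC, hC'D⟩ := h
  have hle : List.Forall₂ (· ≤ ·) (C'.map (ue p)) (D.map (ue p)) := by
    simpa only [List.forall₂_map_left_iff, List.forall₂_map_right_iff] using
      hC'D.imp fun _ _ => ue_le_ue_of_esetSub hp
  calc us p C' ≤ us p D := hle.sum_le_sum
    _ ≤ us p C := (hDC.map _).sum_le_sum fun _ hx => by
      obtain ⟨σ, -, rfl⟩ := List.mem_map.1 hx
      exact ue_nonneg hp σ

end Utility

lemma CSub.nil_left (C : List (Finset α × ℕ)) : CSub [] C :=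
  ⟨[], C.nil_sublist, .nil⟩

lemma Matches.length_eq {C : List (Finset α × ℕ)} {L : List (Finset α)} (h : Matches C L) :
    C.length = L.length := by
  rw [← h, List.length_map]

lemma sSup_matching_le_umaxk {p : α → ℝ} (hp : ∀ l, 0 ≤ p l) (C : List (Finset α × ℕ))
    {L : List (Finset α)} {k : ℕ} (hL : L.length ≤ k) :
    sSup ({x | ∃ C', CSub C' C ∧ Matches C' L ∧ x = us p C'} ∪ {0}) ≤ umaxk p C k := by
  apply csSup_le_csSup
  · exact ⟨us p C, by rintro x ⟨C'', hsub, -, rfl⟩; exact us_le_us_of_csub hp hsub⟩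
  · exact ⟨0, Or.inr rfl⟩
  · rintro x (⟨C', hsub, hm, rfl⟩ | rfl)
    · exact ⟨C', hsub, hm.length_eq.trans_le hL, rfl⟩
    · exact ⟨[], CSub.nil_left C, k.zero_le, by simp [us]⟩

/-- for `|L| ≤ k`, `u_max(L) ≤ LWU_k(L)`. -/
theorem umax_le_lwu (p : α → ℝ) (hp : ∀ l, 0 ≤ p l)
    (δ : Finset (List (Finset α × ℕ))) (k : ℕ)
    (L : List (Finset α)) (hL : L.length ≤ k) :
    umax p δ L ≤ LWU p δ k L := by
  refine Finset.sum_le_sum fun C _ => ?_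
  split_ifs with hmatch
  · exact sSup_matching_le_umaxk hp C hL
  · have hempty : {x | ∃ C', CSub C' C ∧ Matches C' L ∧ x = us p C'} = ∅ :=
      Set.eq_empty_iff_forall_notMem.2 fun _ ⟨C', hsub, hm, _⟩ => hmatch ⟨C', hsub, hm⟩
    simp [hempty]
end

section
/- Utility preservation of the coincidence eventset representation: Let s be an E-sequence whose event-intervals have pairwise distinct labels. Then the utility of the C-sequence CER(s) equals the total weighted duration of s; that is, u_s(CER(s)) = Σ_{(l,b,f) ∈ s} p(l) · (f − b). -/
open scoped Classical

variable {α : Type*}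

/-- The E-sequence unique time points of `s`: all beginning and finishing times. -/
def timePoints (s : List (α × ℕ × ℕ)) : Finset ℕ :=
  (s.map (fun e => e.2.1)).toFinset ∪ (s.map (fun e => e.2.2)).toFinset

/-- `Φ_s(t_p, t_q)`: labels of the event-intervals of `s` covering `[t_p, t_q]`. -/
def Phi [DecidableEq α] (s : List (α × ℕ × ℕ)) (tp tq : ℕ) : Finset α :=
  ((s.filter (fun e => decide (e.2.1 ≤ tp ∧ tq ≤ e.2.2))).map Prod.fst).toFinset

/-- The coincidence eventset representation (CER) of the E-sequence `s`. -/
def CER [DecidableEq α] (s : List (α × ℕ × ℕ)) : List (Finset α × ℕ) :=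
  (List.range (((timePoints s).sort (· ≤ ·)).length - 1)).map (fun k =>
    (Phi s (((timePoints s).sort (· ≤ ·)).getD k 0)
           (((timePoints s).sort (· ≤ ·)).getD (k + 1) 0),
     ((timePoints s).sort (· ≤ ·)).getD (k + 1) 0 -
       ((timePoints s).sort (· ≤ ·)).getD k 0))

/-!
Expanding `u_e` over the labels of each coincidence eventset and exchanging the two sums, an
event-interval `(l, b, f)` contributes `p l` times the total length of the gaps `[t_k, t_{k+1}]`
contained in `[b, f]`; distinct labels ensure that `Φ_s` counts each interval once. Since `b` and
`f` are themselves time points, these gaps are exactly the consecutive ones from `b` to `f`, and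
their lengths telescope to `f - b`.
-/

open Finset

theorem Finset.sum_Ico_tsub_of_monotoneOn {M : Type*} [AddCommMonoid M] [PartialOrder M] [Sub M]
    [OrderedSub M] [AddLeftMono M] [AddLeftReflectLE M] [ExistsAddOfLE M]
    {t : ℕ → M} {i j : ℕ} (hij : i ≤ j) (ht : MonotoneOn t (Set.Icc i j)) :
    ∑ k ∈ Ico i j, (t (k + 1) - t k) = t j - t i := by
  induction j, hij using Nat.le_induction with
  | base => rw [Ico_self, sum_empty, eq_comm, tsub_eq_iff_eq_add_of_le le_rfl, zero_add]
  | succ j hij ih =>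
    have hj : j ∈ Set.Icc i (j + 1) := ⟨hij, j.le_succ⟩
    rw [sum_Ico_succ_top hij, ih (ht.mono (Set.Icc_subset_Icc_right j.le_succ)), add_comm,
      tsub_add_tsub_cancel (ht hj (Set.right_mem_Icc.2 (hij.trans j.le_succ)) j.le_succ)
        (ht (Set.left_mem_Icc.2 (hij.trans j.le_succ)) hj hij)]

theorem List.SortedLT.getD_le_getD_iff {T : List ℕ} (hT : T.SortedLT) {a b d : ℕ}
    (ha : a < T.length) (hb : b < T.length) : T.getD a d ≤ T.getD b d ↔ a ≤ b := by
  rw [List.getD_eq_getElem _ _ ha, List.getD_eq_getElem _ _ hb, hT.getElem_le_getElem_iff]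

theorem List.SortedLT.sum_range_ite_getD_tsub {T : List ℕ} (hT : T.SortedLT) {b f : ℕ}
    (hb : b ∈ T) (hf : f ∈ T) :
    ∑ k ∈ Finset.range (T.length - 1),
      (if b ≤ T.getD k 0 ∧ T.getD (k + 1) 0 ≤ f then T.getD (k + 1) 0 - T.getD k 0 else 0)
      = f - b := by
  obtain ⟨i, hi, rfl⟩ := List.getElem_of_mem hb
  obtain ⟨j, hj, rfl⟩ := List.getElem_of_mem hf
  have hcover : {k ∈ Finset.range (T.length - 1) | T[i] ≤ T.getD k 0 ∧ T.getD (k + 1) 0 ≤ T[j]}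
      = Finset.Ico i j := by
    ext k
    simp only [Finset.mem_filter, Finset.mem_range, Finset.mem_Ico,
      ← List.getD_eq_getElem _ 0 hi, ← List.getD_eq_getElem _ 0 hj]
    constructor
    · rintro ⟨hk, hik, hkj⟩
      rw [hT.getD_le_getD_iff hi (by omega)] at hik
      rw [hT.getD_le_getD_iff (by omega) hj] at hkj
      omega
    · rintro ⟨hik, hkj⟩
      exact ⟨by omega, (hT.getD_le_getD_iff hi (by omega)).2 hik,
        (hT.getD_le_getD_iff (by omega) hj).2 hkj⟩
  rw [← sum_filter, hcover]
  rcases le_total i j with hij | hji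
  · rw [sum_Ico_tsub_of_monotoneOn (t := (T.getD · 0)) hij, List.getD_eq_getElem _ _ hi,
      List.getD_eq_getElem _ _ hj]
    intro a ha c hc hac
    exact (hT.getD_le_getD_iff (by grind) (by grind)).2 hac
  · rw [Finset.Ico_eq_empty_of_le hji, sum_empty, eq_comm, tsub_eq_zero_iff_le]
    exact hT.getElem_le_getElem_iff.2 hji

theorem Phi_eq_image [DecidableEq α] (s : List (α × ℕ × ℕ)) (a c : ℕ) :
    Phi s a c = {e ∈ s.toFinset | e.2.1 ≤ a ∧ c ≤ e.2.2}.image Prod.fst := by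
  ext
  simp [Phi]

theorem sum_Phi {M : Type*} [AddCommMonoid M] [DecidableEq α] {s : List (α × ℕ × ℕ)}
    (hlab : (s.map Prod.fst).Nodup) (g : α → M) (a c : ℕ) :
    ∑ l ∈ Phi s a c, g l = ∑ e ∈ s.toFinset, if e.2.1 ≤ a ∧ c ≤ e.2.2 then g e.1 else 0 := by
  rw [Phi_eq_image, sum_image, sum_filter]
  intro e he e' he'
  exact List.inj_on_of_nodup_map hlab (List.mem_toFinset.1 (mem_filter.1 he).1)
    (List.mem_toFinset.1 (mem_filter.1 he').1)

theorem ue_Phi [DecidableEq α] {s : List (α × ℕ × ℕ)} (hlab : (s.map Prod.fst).Nodup)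
    (p : α → ℝ) (a c d : ℕ) :
    ue p (Phi s a c, d)
      = ∑ e ∈ s.toFinset, p e.1 * ((if e.2.1 ≤ a ∧ c ≤ e.2.2 then d else 0 : ℕ) : ℝ) := by
  rw [ue, sum_Phi hlab, mul_sum]
  refine sum_congr rfl fun e _ => ?_
  split_ifs <;> simp [mul_comm]

theorem mem_timePoints_of_mem {s : List (α × ℕ × ℕ)} {e : α × ℕ × ℕ} (he : e ∈ s) :
    e.2.1 ∈ timePoints s ∧ e.2.2 ∈ timePoints s := by
  simp only [timePoints, mem_union, List.mem_toFinset, List.mem_map]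
  exact ⟨.inl ⟨e, he, rfl⟩, .inr ⟨e, he, rfl⟩⟩

theorem cer_utility_preservation_general [DecidableEq α] (p : α → ℝ) (s : List (α × ℕ × ℕ))
    (hlab : (s.map Prod.fst).Nodup) :
    us p (CER s) = (s.map (fun e => p e.1 * ((e.2.2 - e.2.1 : ℕ) : ℝ))).sum := by
  set T := (timePoints s).sort (· ≤ ·)
  have hT : T.SortedLT := sortedLT_sort _
  calc us p (CER s)
      = ∑ k ∈ range (T.length - 1),
          ue p (Phi s (T.getD k 0) (T.getD (k + 1) 0), T.getD (k + 1) 0 - T.getD k 0) := by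
        rw [us, CER, List.map_map]
        rfl
    _ = ∑ e ∈ s.toFinset, ∑ k ∈ range (T.length - 1), p e.1 *
          ((if e.2.1 ≤ T.getD k 0 ∧ T.getD (k + 1) 0 ≤ e.2.2
            then T.getD (k + 1) 0 - T.getD k 0 else 0 : ℕ) : ℝ) := by
        simp only [ue_Phi hlab]
        exact sum_comm
    _ = ∑ e ∈ s.toFinset, p e.1 * ((e.2.2 - e.2.1 : ℕ) : ℝ) := by
        refine sum_congr rfl fun e he => ?_
        have ⟨hb, hf⟩ := mem_timePoints_of_mem (List.mem_toFinset.1 he)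
        rw [← mul_sum, ← Nat.cast_sum,
          hT.sum_range_ite_getD_tsub ((mem_sort _).2 hb) ((mem_sort _).2 hf)]
    _ = _ := List.sum_toFinset _ (hlab.of_map _)

/-- Utility preservation of the CER: if the event-intervals of `s` have
pairwise distinct labels, then `u_s(CER(s)) = Σ_{(l,b,f) ∈ s} p(l) · (f − b)`. -/
theorem cer_utility_preservation [DecidableEq α] (p : α → ℝ) (hp : ∀ l, 0 ≤ p l)
    (s : List (α × ℕ × ℕ)) (hbf : ∀ e ∈ s, e.2.1 < e.2.2)
    (hlab : (s.map Prod.fst).Nodup) :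
    us p (CER s) = (s.map (fun e => p e.1 * ((e.2.2 - e.2.1 : ℕ) : ℝ))).sum :=
  cer_utility_preservation_general p s hlab
end
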